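/- For the Chinese monoid CH({x_1 < x_2}) on a two-element ordered set, the staircase words x_1^a (x_2 x_1)^b x_2^c, for non-negative integers a, b, c, represent pairwise distinct elements and every element is represented by exactly one such word. -/

import Mathlib

open FreeMonoid

/-- The Chinese relations `cba = bca` and `cba = cab` for `a ≤ b ≤ c`. -/
def chineseRel (X : Type*) [LinearOrder X] : FreeMonoid X → FreeMonoid X → Prop :=
  fun u v => ∃ a b c : X, a ≤ b ∧ b ≤ c ∧
    u = of c * of b * of a ∧
    (v = of b * of c * of a ∨ v = of c * of a * of b)

/-- The Chinese monoid on two generators `x_1 < x_2`. -/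
abbrev CH2 := (conGen (chineseRel (Fin 2))).Quotient

/-!
Write `x`, `y` for the generators and `t = y x`. The two Chinese relations say exactly that `x` and
`y` commute with `t`, so a product `y · x^a t^b y^c` rewrites to `x^(a-1) t^(b+1) y^c` when `a > 0`
and to `t^b y^(c+1)` when `a = 0`; hence every element is a staircase word. For uniqueness, the
staircase triples form a monoid under the multiplication these rewritings dictate, the Chinese
relations hold in it, and the induced map sends the staircase word of `(a, b, c)` back to
`(a, b, c)`.
-/

section ChineseMonoid

variable {X : Type*} [LinearOrder X]

theorem chineseRel_mk'_eq {u v : FreeMonoid X} (h : chineseRel X u v) :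
    (conGen (chineseRel X)).mk' u = (conGen (chineseRel X)).mk' v :=
  (Con.eq _).mpr (ConGen.Rel.of _ _ h)

theorem chinese_cba_eq_bca {a b c : X} (hab : a ≤ b) (hbc : b ≤ c) :
    (conGen (chineseRel X)).mk' (of c * of b * of a) =
      (conGen (chineseRel X)).mk' (of b * of c * of a) :=
  chineseRel_mk'_eq ⟨a, b, c, hab, hbc, rfl, .inl rfl⟩

theorem chinese_cba_eq_cab {a b c : X} (hab : a ≤ b) (hbc : b ≤ c) :
    (conGen (chineseRel X)).mk' (of c * of b * of a) =
      (conGen (chineseRel X)).mk' (of c * of a * of b) :=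
  chineseRel_mk'_eq ⟨a, b, c, hab, hbc, rfl, .inr rfl⟩

end ChineseMonoid

namespace CH2

def x : CH2 := (conGen (chineseRel (Fin 2))).mk' (of 0)

def y : CH2 := (conGen (chineseRel (Fin 2))).mk' (of 1)

theorem commute_x_yx : Commute x (y * x) := by
  have h := chinese_cba_eq_bca (X := Fin 2) (a := 0) (b := 0) (c := 1) le_rfl zero_le_one
  simp only [map_mul] at h
  exact (h.trans (mul_assoc _ _ _)).symm

theorem commute_y_yx : Commute y (y * x) := by
  have h := chinese_cba_eq_cab (X := Fin 2) (a := 0) (b := 1) (c := 1) zero_le_one le_rfl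
  simp only [map_mul] at h
  exact (mul_assoc _ _ _).symm.trans h

def staircase (a b c : ℕ) : CH2 := x ^ a * (y * x) ^ b * y ^ c

theorem x_mul_staircase (a b c : ℕ) : x * staircase a b c = staircase (a + 1) b c := by
  simp only [staircase, ← mul_assoc, ← pow_succ']

theorem yx_mul_staircase (a b c : ℕ) : y * x * staircase a b c = staircase a (b + 1) c := by
  rw [staircase, staircase, ← mul_assoc, ← mul_assoc, (commute_x_yx.symm.pow_right a).eq,
    mul_assoc (x ^ a) (y * x), ← pow_succ']

theorem y_mul_staircase_zero (b c : ℕ) : y * staircase 0 b c = staircase 0 b (c + 1) := by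
  simp only [staircase, pow_zero, one_mul, ← mul_assoc, (commute_y_yx.pow_right b).eq]
  rw [mul_assoc, ← pow_succ']

theorem y_mul_staircase_succ (a b c : ℕ) :
    y * staircase (a + 1) b c = staircase a (b + 1) c := by
  rw [← x_mul_staircase, ← mul_assoc, yx_mul_staircase]

theorem exists_staircase_eq (z : CH2) : ∃ a b c : ℕ, staircase a b c = z := by
  induction z using Con.induction_on with
  | H w =>
    induction w using FreeMonoid.recOn with
    | one => exact ⟨0, 0, 0, by simp [staircase]⟩
    | of_mul g w ih =>
      obtain ⟨a, b, c, h⟩ := ih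
      rw [Con.coe_mul, ← h]
      fin_cases g
      · exact ⟨a + 1, b, c, (x_mul_staircase a b c).symm⟩
      · cases a with
        | zero => exact ⟨0, b, c + 1, (y_mul_staircase_zero b c).symm⟩
        | succ a => exact ⟨a, b + 1, c, (y_mul_staircase_succ a b c).symm⟩

/-- The triple `(a, b, c)` stands for `x^a (y x)^b y^c`. -/
@[ext]
structure Triple where
  a : ℕ
  b : ℕ
  c : ℕ
deriving DecidableEq

namespace Triple

/-- In `x^a t^b y^c · x^a' t^b' y^c'` the middle `y^c x^a'` becomes
`x^(a'-c) t^(min c a') y^(c-a')`. -/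
instance : Mul Triple :=
  ⟨fun p q => ⟨p.a + (q.a - p.c), p.b + q.b + min p.c q.a, (p.c - q.a) + q.c⟩⟩

instance : One Triple := ⟨⟨0, 0, 0⟩⟩

theorem one_def : (1 : Triple) = ⟨0, 0, 0⟩ := rfl

theorem mul_def (p q : Triple) :
    p * q = ⟨p.a + (q.a - p.c), p.b + q.b + min p.c q.a, (p.c - q.a) + q.c⟩ := rfl

instance : Monoid Triple where
  mul_assoc p q r := by ext <;> simp only [mul_def] <;> omega
  one_mul p := by ext <;> simp [mul_def, one_def]
  mul_one p := by ext <;> simp [mul_def, one_def]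

theorem mk_eq_mul (a b c : ℕ) :
    (⟨a, b, c⟩ : Triple) = ⟨a, 0, 0⟩ * ⟨0, b, 0⟩ * ⟨0, 0, c⟩ := by
  ext <;> simp [mul_def]

theorem pow_a (n : ℕ) : (⟨1, 0, 0⟩ : Triple) ^ n = ⟨n, 0, 0⟩ := by
  induction n with
  | zero => rfl
  | succ n ih => rw [pow_succ, ih]; ext <;> simp [mul_def]

theorem pow_b (n : ℕ) : (⟨0, 1, 0⟩ : Triple) ^ n = ⟨0, n, 0⟩ := by
  induction n with
  | zero => rfl
  | succ n ih => rw [pow_succ, ih]; ext <;> simp [mul_def]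

theorem pow_c (n : ℕ) : (⟨0, 0, 1⟩ : Triple) ^ n = ⟨0, 0, n⟩ := by
  induction n with
  | zero => rfl
  | succ n ih => rw [pow_succ, ih]; ext <;> simp [mul_def]

def ofGenerator (i : Fin 2) : Triple := if i = 0 then ⟨1, 0, 0⟩ else ⟨0, 0, 1⟩

theorem chineseRel_le_ker :
    conGen (chineseRel (Fin 2)) ≤ Con.ker (FreeMonoid.lift ofGenerator) := by
  have relations : ∀ a b c : Fin 2, a ≤ b → b ≤ c →
      ofGenerator c * ofGenerator b * ofGenerator a =
        ofGenerator b * ofGenerator c * ofGenerator a ∧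
      ofGenerator c * ofGenerator b * ofGenerator a =
        ofGenerator c * ofGenerator a * ofGenerator b := by
    decide
  refine Con.conGen_le.mpr ?_
  rintro _ _ ⟨a, b, c, hab, hbc, rfl, rfl | rfl⟩ <;>
    simp only [Con.ker_rel, map_mul, lift_eval_of]
  exacts [(relations a b c hab hbc).1, (relations a b c hab hbc).2]

end Triple

def toTriple : CH2 →* Triple :=
  (conGen (chineseRel (Fin 2))).lift (FreeMonoid.lift Triple.ofGenerator) Triple.chineseRel_le_ker

theorem toTriple_staircase (a b c : ℕ) : toTriple (staircase a b c) = ⟨a, b, c⟩ := by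
  have hx : toTriple x = ⟨1, 0, 0⟩ := rfl
  have hy : toTriple y = ⟨0, 0, 1⟩ := rfl
  have hyx : toTriple (y * x) = ⟨0, 1, 0⟩ := by rw [map_mul, hx, hy]; rfl
  rw [staircase, map_mul, map_mul, map_pow, map_pow, map_pow, hx, hyx, hy,
    Triple.pow_a, Triple.pow_b, Triple.pow_c]
  exact (Triple.mk_eq_mul a b c).symm

theorem staircase_injective :
    Function.Injective (fun p : ℕ × ℕ × ℕ => staircase p.1 p.2.1 p.2.2) := by
  rintro ⟨a, b, c⟩ ⟨a', b', c'⟩ h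
  have h' := congrArg toTriple h
  simp only [toTriple_staircase, Triple.mk.injEq] at h'
  obtain ⟨rfl, rfl, rfl⟩ := h'
  rfl

theorem staircase_surjective :
    Function.Surjective (fun p : ℕ × ℕ × ℕ => staircase p.1 p.2.1 p.2.2) := fun z => by
  obtain ⟨a, b, c, h⟩ := exists_staircase_eq z
  exact ⟨(a, b, c), h⟩

end CH2

/-- For the Chinese monoid on `{x_1 < x_2}`, the staircase words
`x_1^a (x_2 x_1)^b x_2^c` represent pairwise distinct elements and every
element is represented by exactly one such word: the evaluation map is a
bijection. -/
theorem chinese_two_generators_normal_form :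
    Function.Bijective (fun p : ℕ × ℕ × ℕ =>
      ((conGen (chineseRel (Fin 2))).mk' (of (0 : Fin 2))) ^ p.1 *
      ((conGen (chineseRel (Fin 2))).mk' (of (1 : Fin 2)) *
        (conGen (chineseRel (Fin 2))).mk' (of (0 : Fin 2))) ^ p.2.1 *
      ((conGen (chineseRel (Fin 2))).mk' (of (1 : Fin 2))) ^ p.2.2) :=
  ⟨CH2.staircase_injective, CH2.staircase_surjective⟩
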